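/- arXiv:1912.00786 — 17 statements merged into one kernel-verified Lean document; each statement's English description precedes it below -/
import Mathlib

section
/- Let n be a natural number, v : Fin n → Fin n → ℝ a valuation matrix, and p : Fin n → ℝ a price vector. If a permutation σ : Fin n ≃ Fin n is induced by p (i.e., for every buyer i and every product k, v i (σ i) - p (σ i) ≥ v i k - p k), then σ is a maximum matching: for every permutation τ : Fin n ≃ Fin n, ∑ i, v i (σ i) ≥ ∑ i, v i (τ i). -/
/-- If a permutation `σ` is induced by the price vector `p` (every buyer `i`
prefers product `σ i` at prices `p`), then `σ` is a maximum matching. -/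
theorem stmt_0 (n : ℕ) (v : Fin n → Fin n → ℝ) (p : Fin n → ℝ)
    (σ : Equiv.Perm (Fin n))
    (hσ : ∀ i k, v i (σ i) - p (σ i) ≥ v i k - p k) :
    ∀ τ : Equiv.Perm (Fin n), ∑ i, v i (σ i) ≥ ∑ i, v i (τ i) := by
  intro τ
  have h1 : ∑ i, (v i (σ i) - p (σ i)) ≥ ∑ i, (v i (τ i) - p (τ i)) :=
    Finset.sum_le_sum fun i _ => hσ i (τ i)
  have h2 : ∑ i, p (σ i) = ∑ i, p (τ i) := by
    rw [Equiv.sum_comp σ p, Equiv.sum_comp τ p]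
  simp only [Finset.sum_sub_distrib] at h1
  linarith
end

section
/- Let n be a natural number and v : Fin n → Fin n → ℝ a valuation matrix. If p : Fin n → ℝ is a market-clearing price vector, then the set PM(p) of permutations induced by p is nonempty and is contained in the set of maximum matchings: every σ ∈ PM(p) satisfies ∑ i, v i (σ i) ≥ ∑ i, v i (τ i) for all permutations τ. -/
/-- `σ` is induced by `p`: every buyer `i` prefers product `σ i` at prices `p`. -/
def Induced (n : ℕ) (v : Fin n → Fin n → ℝ) (p : Fin n → ℝ)
    (σ : Equiv.Perm (Fin n)) : Prop :=
  ∀ i k, v i (σ i) - p (σ i) ≥ v i k - p k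

/-- The set of permutations induced by `p`. -/
def PM (n : ℕ) (v : Fin n → Fin n → ℝ) (p : Fin n → ℝ) :
    Set (Equiv.Perm (Fin n)) :=
  {σ | Induced n v p σ}

/-- `p` is market-clearing: some permutation is induced by `p`. -/
def MarketClearing (n : ℕ) (v : Fin n → Fin n → ℝ) (p : Fin n → ℝ) : Prop :=
  ∃ σ : Equiv.Perm (Fin n), Induced n v p σ

/-- Market-clearing prices induce a nonempty set of matchings, all of which
are maximum matchings. -/
theorem stmt_1 (n : ℕ) (v : Fin n → Fin n → ℝ) (p : Fin n → ℝ)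
    (hp : MarketClearing n v p) :
    (PM n v p).Nonempty ∧
      ∀ σ ∈ PM n v p, ∀ τ : Equiv.Perm (Fin n),
        ∑ i, v i (σ i) ≥ ∑ i, v i (τ i) := by
  obtain ⟨σ0, hσ0⟩ := hp
  refine ⟨⟨σ0, hσ0⟩, fun σ hσ τ => ?_⟩
  have key : ∑ i, (v i (σ i) - p (σ i)) ≥ ∑ i, (v i (τ i) - p (τ i)) :=
    Finset.sum_le_sum fun i _ => hσ i (τ i)
  have hperm : ∀ ρ : Equiv.Perm (Fin n), ∑ i, p (ρ i) = ∑ i, p i :=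
    fun ρ => Equiv.sum_comp ρ p
  have h1 := hperm σ
  have h2 := hperm τ
  simp only [Finset.sum_sub_distrib, h1, h2] at key
  linarith
end

section
/- Let n be a natural number, v : Fin n → Fin n → ℝ a valuation matrix, and p, q : Fin n → ℝ price vectors. For any α ∈ [0,1], every permutation σ that is induced by both p and q is also induced by the convex combination r = α • p + (1 - α) • q. -/
/-- A permutation induced by both `p` and `q` is induced by any convex
combination of `p` and `q`. -/
theorem stmt_4 (n : ℕ) (v : Fin n → Fin n → ℝ) (p q : Fin n → ℝ)
    (α : ℝ) (hα : α ∈ Set.Icc (0 : ℝ) 1) (σ : Equiv.Perm (Fin n))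
    (hp : Induced n v p σ) (hq : Induced n v q σ) :
    Induced n v (α • p + (1 - α) • q) σ := by
  intro i k
  have h1 := hp i k
  have h2 := hq i k
  obtain ⟨h0, h1'⟩ := hα
  simp only [Pi.add_apply, Pi.smul_apply, smul_eq_mul]
  nlinarith [mul_le_mul_of_nonneg_left (sub_le_sub_right h1 0) h0]
end

section
/- Let n be a natural number, v : Fin n → Fin n → ℝ a valuation matrix, and p, q : Fin n → ℝ price vectors. Every permutation σ that is induced by both p and q is also induced by the element-wise maximum r defined by r j = max (p j) (q j). -/
/-- A permutation induced by both `p` and `q` is induced by their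
element-wise maximum. -/
theorem stmt_5 (n : ℕ) (v : Fin n → Fin n → ℝ) (p q : Fin n → ℝ)
    (σ : Equiv.Perm (Fin n))
    (hp : Induced n v p σ) (hq : Induced n v q σ) :
    Induced n v (fun j => max (p j) (q j)) σ := by
  intro i k
  have h1 := hp i k
  have h2 := hq i k
  have hpk : p k ≤ max (p k) (q k) := le_max_left _ _
  have hqk : q k ≤ max (p k) (q k) := le_max_right _ _
  rcases max_cases (p (σ i)) (q (σ i)) with ⟨h, _⟩ | ⟨h, _⟩ <;> simp only [h] <;> linarith
end

section
/- Let n be a natural number, v : Fin n → Fin n → ℝ a valuation matrix, and p, q : Fin n → ℝ price vectors. Every permutation σ that is induced by both p and q is also induced by the element-wise minimum r defined by r j = min (p j) (q j). -/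
/-- A permutation induced by both `p` and `q` is induced by their
element-wise minimum. -/
theorem stmt_6 (n : ℕ) (v : Fin n → Fin n → ℝ) (p q : Fin n → ℝ)
    (σ : Equiv.Perm (Fin n))
    (hp : Induced n v p σ) (hq : Induced n v q σ) :
    Induced n v (fun j => min (p j) (q j)) σ := by
  intro i k
  simp only
  have h1 := hp i k
  have h2 := hq i k
  rcases min_cases (p (σ i)) (q (σ i)) with ⟨h, h'⟩ | ⟨h, h'⟩ <;> rw [h] <;>
    rcases min_cases (p k) (q k) with ⟨hk, hk'⟩ | ⟨hk, hk'⟩ <;> rw [hk] <;> linarith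
end

section
/- (Same set of induced matchings) Let n be a natural number and v : Fin n → Fin n → ℝ a valuation matrix. If p, q : Fin n → ℝ are both market-clearing price vectors, then they induce exactly the same set of permutations: PM(p) = PM(q), i.e., a permutation σ satisfies (∀ i k, v i (σ i) - p (σ i) ≥ v i k - p k) if and only if it satisfies (∀ i k, v i (σ i) - q (σ i) ≥ v i k - q k). -/
lemma sum_val_ge (n : ℕ) (v : Fin n → Fin n → ℝ) (p : Fin n → ℝ)
    (σ τ : Equiv.Perm (Fin n)) (hσ : Induced n v p σ) :
    ∑ i, v i (σ i) ≥ ∑ i, v i (τ i) := by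
  have h : ∑ i, (v i (σ i) - p (σ i)) ≥ ∑ i, (v i (τ i) - p (τ i)) :=
    Finset.sum_le_sum fun i _ => hσ i (τ i)
  have hs : ∑ i, p (σ i) = ∑ i, p (τ i) := by
    rw [Equiv.sum_comp σ p, Equiv.sum_comp τ p]
  simp only [Finset.sum_sub_distrib] at h
  linarith

lemma induced_trans (n : ℕ) (v : Fin n → Fin n → ℝ) (p q : Fin n → ℝ)
    (σ τ : Equiv.Perm (Fin n)) (hσ : Induced n v p σ) (hτ : Induced n v q τ) :
    Induced n v q σ := by
  have h1 := sum_val_ge n v p σ τ hσ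
  have h2 := sum_val_ge n v q τ σ hτ
  -- each i: v i (τ i) - q (τ i) ≥ v i (σ i) - q (σ i); sums equal ⇒ equality
  have hs : ∑ i, q (σ i) = ∑ i, q (τ i) := by
    rw [Equiv.sum_comp σ q, Equiv.sum_comp τ q]
  have hsum : ∑ i, ((v i (τ i) - q (τ i)) - (v i (σ i) - q (σ i))) = 0 := by
    simp only [Finset.sum_sub_distrib]
    linarith
  have heq : ∀ i ∈ Finset.univ,
      (v i (τ i) - q (τ i)) - (v i (σ i) - q (σ i)) = 0 := by
    rw [← Finset.sum_eq_zero_iff_of_nonneg (fun i _ => by linarith [hτ i (σ i)])]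
    exact hsum
  intro i k
  have := heq i (Finset.mem_univ i)
  have := hτ i k
  linarith

/-- Any two market-clearing price vectors induce the same set of matchings. -/
theorem stmt_7 (n : ℕ) (v : Fin n → Fin n → ℝ) (p q : Fin n → ℝ)
    (hp : MarketClearing n v p) (hq : MarketClearing n v q) :
    PM n v p = PM n v q := by
  obtain ⟨σ₀, hσ₀⟩ := hp
  obtain ⟨τ₀, hτ₀⟩ := hq
  ext σ
  constructor
  · exact fun h => induced_trans n v p q σ τ₀ h hτ₀
  · exact fun h => induced_trans n v q p σ σ₀ h hσ₀
end

section
/- Let n be a natural number and v : Fin n → Fin n → ℝ a valuation matrix. If p, q : Fin n → ℝ are each market-clearing, and σ is a permutation induced by p, then σ is also induced by q (one inclusion of the same-set-of-induced-matchings lemma). -/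
/-- One inclusion of the same-set lemma: if `p` and `q` are market-clearing
and `σ` is induced by `p`, then `σ` is induced by `q`. -/
theorem stmt_8 (n : ℕ) (v : Fin n → Fin n → ℝ) (p q : Fin n → ℝ)
    (hp : MarketClearing n v p) (hq : MarketClearing n v q)
    (σ : Equiv.Perm (Fin n)) (hσ : Induced n v p σ) :
    Induced n v q σ := by
  obtain ⟨τ, hτ⟩ := hq
  have h1 : ∀ i, v i (σ i) - q (σ i) ≤ v i (τ i) - q (τ i) := fun i => hτ i (σ i)
  have hs : ∑ i, (v i (σ i) - q (σ i)) = ∑ i, (v i (τ i) - q (τ i)) := by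
    apply le_antisymm (Finset.sum_le_sum fun i _ => h1 i)
    have h2 : ∀ i, v i (τ i) - p (τ i) ≤ v i (σ i) - p (σ i) := fun i => hσ i (τ i)
    have hps : ∑ i, p (σ i) = ∑ i, p (τ i) := by
      rw [Equiv.sum_comp σ p, Equiv.sum_comp τ p]
    have hqs : ∑ i, q (σ i) = ∑ i, q (τ i) := by
      rw [Equiv.sum_comp σ q, Equiv.sum_comp τ q]
    have h3 := Finset.sum_le_sum (fun i (_ : i ∈ Finset.univ) => h2 i)
    simp only [Finset.sum_sub_distrib] at *
    linarith
  have key : ∀ i, v i (σ i) - q (σ i) = v i (τ i) - q (τ i) := by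
    intro i
    by_contra hne
    have hlt : v i (σ i) - q (σ i) < v i (τ i) - q (τ i) := lt_of_le_of_ne (h1 i) hne
    have := Finset.sum_lt_sum (fun j (_ : j ∈ Finset.univ) => h1 j)
      ⟨i, Finset.mem_univ i, hlt⟩
    linarith
  intro i k
  calc v i (σ i) - q (σ i) = v i (τ i) - q (τ i) := key i
    _ ≥ v i k - q k := hτ i k
end

section
/- Let n be a natural number and v : Fin n → Fin n → ℝ a valuation matrix. The set S = {p : Fin n → ℝ | p is market-clearing for v} is a convex subset of Fin n → ℝ. -/
/-- Any permutation induced by some price vector has maximal total value. -/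
lemma induced_sum_ge (n : ℕ) (v : Fin n → Fin n → ℝ) (p : Fin n → ℝ)
    (σ τ : Equiv.Perm (Fin n)) (h : Induced n v p σ) :
    ∑ i, v i (τ i) ≤ ∑ i, v i (σ i) := by
  have key : ∑ i, (v i (τ i) - p (τ i)) ≤ ∑ i, (v i (σ i) - p (σ i)) :=
    Finset.sum_le_sum fun i _ => h i (τ i)
  have h1 : ∑ i, p (σ i) = ∑ j, p j := Equiv.sum_comp σ p
  have h2 : ∑ i, p (τ i) = ∑ j, p j := Equiv.sum_comp τ p
  simp only [Finset.sum_sub_distrib, h1, h2] at key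
  linarith

/-- If σ₁ is induced by p₁ and σ₂ by p₂, then σ₁ is also induced by p₂. -/
lemma induced_swap (n : ℕ) (v : Fin n → Fin n → ℝ) (p₁ p₂ : Fin n → ℝ)
    (σ₁ σ₂ : Equiv.Perm (Fin n)) (h1 : Induced n v p₁ σ₁) (h2 : Induced n v p₂ σ₂) :
    Induced n v p₂ σ₁ := by
  have hval : ∑ i, v i (σ₂ i) ≤ ∑ i, v i (σ₁ i) := induced_sum_ge n v p₁ σ₁ σ₂ h1
  have hnn : ∀ i ∈ Finset.univ, 0 ≤ (v i (σ₂ i) - p₂ (σ₂ i)) - (v i (σ₁ i) - p₂ (σ₁ i)) :=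
    fun i _ => by have := h2 i (σ₁ i); linarith
  have hsum : ∑ i, ((v i (σ₂ i) - p₂ (σ₂ i)) - (v i (σ₁ i) - p₂ (σ₁ i))) = 0 := by
    have e1 : ∑ i, p₂ (σ₁ i) = ∑ j, p₂ j := Equiv.sum_comp σ₁ p₂
    have e2 : ∑ i, p₂ (σ₂ i) = ∑ j, p₂ j := Equiv.sum_comp σ₂ p₂
    have hle : ∑ i, ((v i (σ₂ i) - p₂ (σ₂ i)) - (v i (σ₁ i) - p₂ (σ₁ i))) ≤ 0 := by
      simp only [Finset.sum_sub_distrib, e1, e2]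
      linarith
    exact le_antisymm hle (Finset.sum_nonneg hnn)
  have heach := (Finset.sum_eq_zero_iff_of_nonneg hnn).mp hsum
  intro i k
  have hi := heach i (Finset.mem_univ i)
  have := h2 i k
  linarith

/-- The set of market-clearing price vectors is convex. -/
theorem stmt_10 (n : ℕ) (v : Fin n → Fin n → ℝ) :
    Convex ℝ {p : Fin n → ℝ | MarketClearing n v p} := by
  rintro p₁ ⟨σ₁, h1⟩ p₂ ⟨σ₂, h2⟩ a b ha hb hab
  refine ⟨σ₁, fun i k => ?_⟩
  have hA := h1 i k
  have hB := induced_swap n v p₁ p₂ σ₁ σ₂ h1 h2 i k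
  have : (a • p₁ + b • p₂) (σ₁ i) = a * p₁ (σ₁ i) + b * p₂ (σ₁ i) := rfl
  have hk : (a • p₁ + b • p₂) k = a * p₁ k + b * p₂ k := rfl
  rw [this, hk]
  have t1 : a * (v i k - p₁ k) ≤ a * (v i (σ₁ i) - p₁ (σ₁ i)) := mul_le_mul_of_nonneg_left hA ha
  have t2 : b * (v i k - p₂ k) ≤ b * (v i (σ₁ i) - p₂ (σ₁ i)) := mul_le_mul_of_nonneg_left hB hb
  have e1 : a * v i k + b * v i k = v i k := by rw [← add_mul, hab, one_mul]
  have e2 : a * v i (σ₁ i) + b * v i (σ₁ i) = v i (σ₁ i) := by rw [← add_mul, hab, one_mul]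
  nlinarith [t1, t2, e1, e2]
end

section
/- Let n be a natural number and v : Fin n → Fin n → ℝ a valuation matrix. If p, q : Fin n → ℝ are both market-clearing price vectors, then the element-wise maximum r defined by r j = max (p j) (q j) is also market-clearing. -/
/-- The element-wise maximum of two market-clearing price vectors is
market-clearing. -/
theorem stmt_11 (n : ℕ) (v : Fin n → Fin n → ℝ) (p q : Fin n → ℝ)
    (hp : MarketClearing n v p) (hq : MarketClearing n v q) :
    MarketClearing n v (fun j => max (p j) (q j)) := by
  obtain ⟨σ, hσ⟩ := hp
  obtain ⟨τ, hτ⟩ := hq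
  set up : Fin n → ℝ := fun i => v i (σ i) - p (σ i) with hupdef
  set uq : Fin n → ℝ := fun i => v i (τ i) - q (τ i) with huqdef
  set m : Fin n → ℝ := fun i => min (up i) (uq i) with hmdef
  -- Key inequality A: utility at max prices is at most m i
  have keyA : ∀ i j, v i j - max (p j) (q j) ≤ m i := by
    intro i j
    have h1 : v i j - p j ≤ up i := hσ i j
    have h2 : v i j - q j ≤ uq i := hτ i j
    have h3 : p j ≤ max (p j) (q j) := le_max_left _ _
    have h4 : q j ≤ max (p j) (q j) := le_max_right _ _
    exact le_min (by linarith) (by linarith)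
  -- Key inequality B: utility at min prices is at most max of utilities
  have keyB : ∀ i j, v i j - min (p j) (q j) ≤ max (up i) (uq i) := by
    intro i j
    rcases le_total (p j) (q j) with h | h
    · rw [min_eq_left h]
      exact le_trans (hσ i j) (le_max_left _ _)
    · rw [min_eq_right h]
      exact le_trans (hτ i j) (le_max_right _ _)
  -- Sum identities
  have Sup : ∑ i, up i = ∑ i, v i (σ i) - ∑ j, p j := by
    rw [Finset.sum_sub_distrib]
    congr 1
    exact Equiv.sum_comp σ p
  have Suq : ∑ i, uq i = ∑ i, v i (τ i) - ∑ j, q j := by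
    rw [Finset.sum_sub_distrib]
    congr 1
    exact Equiv.sum_comp τ q
  have Smm : ∑ i, m i + ∑ i, max (up i) (uq i) = ∑ i, up i + ∑ i, uq i := by
    rw [← Finset.sum_add_distrib, ← Finset.sum_add_distrib]
    exact Finset.sum_congr rfl fun i _ => min_add_max _ _
  have Spq : ∑ j, max (p j) (q j) + ∑ j, min (p j) (q j) = ∑ j, p j + ∑ j, q j := by
    rw [← Finset.sum_add_distrib, ← Finset.sum_add_distrib]
    exact Finset.sum_congr rfl fun j _ => by rw [add_comm]; exact min_add_max _ _
  -- Bound: W_τ ≤ ∑ max utilities + ∑ min prices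
  have Hbound : ∑ i, v i (τ i) ≤ ∑ i, max (up i) (uq i) + ∑ j, min (p j) (q j) := by
    have h1 : ∑ i, v i (τ i) ≤ ∑ i, (max (up i) (uq i) + min (p (τ i)) (q (τ i))) :=
      Finset.sum_le_sum fun i _ => by have := keyB i (τ i); linarith
    have h2 : ∑ i, min (p (τ i)) (q (τ i)) = ∑ j, min (p j) (q j) :=
      Equiv.sum_comp τ (fun j => min (p j) (q j))
    rw [Finset.sum_add_distrib, h2] at h1
    exact h1
  -- Main sum inequality
  have Hgoal : ∑ i, m i ≤ ∑ i, (v i (σ i) - max (p (σ i)) (q (σ i))) := by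
    have h2 : ∑ i, max (p (σ i)) (q (σ i)) = ∑ j, max (p j) (q j) :=
      Equiv.sum_comp σ (fun j => max (p j) (q j))
    rw [Finset.sum_sub_distrib, h2]
    linarith
  -- Pointwise equality
  have Hle : ∀ i ∈ Finset.univ, v i (σ i) - max (p (σ i)) (q (σ i)) ≤ m i :=
    fun i _ => keyA i (σ i)
  have Hsumle : ∑ i, (v i (σ i) - max (p (σ i)) (q (σ i))) ≤ ∑ i, m i :=
    Finset.sum_le_sum Hle
  have Hsumeq : ∑ i, (v i (σ i) - max (p (σ i)) (q (σ i))) = ∑ i, m i :=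
    le_antisymm Hsumle Hgoal
  have Heach := (Finset.sum_eq_sum_iff_of_le Hle).mp Hsumeq
  refine ⟨σ, fun i k => ?_⟩
  have h1 := Heach i (Finset.mem_univ i)
  have h2 := keyA i k
  simp only at h1 ⊢
  linarith
end

section
/- Let n be a natural number and v : Fin n → Fin n → ℝ a valuation matrix. If p, q : Fin n → ℝ are both market-clearing price vectors, then the element-wise minimum r defined by r j = min (p j) (q j) is also market-clearing. -/
/-- The element-wise minimum of two market-clearing price vectors is
market-clearing. -/
theorem stmt_12 (n : ℕ) (v : Fin n → Fin n → ℝ) (p q : Fin n → ℝ)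
    (hp : MarketClearing n v p) (hq : MarketClearing n v q) :
    MarketClearing n v (fun j => min (p j) (q j)) := by
  classical
  obtain ⟨σ, hσ⟩ := hp
  obtain ⟨τ, hτ⟩ := hq
  set f : Fin n → Fin n :=
    fun i => if v i (σ i) - p (σ i) ≥ v i (τ i) - q (τ i) then σ i else τ i with hf
  have hinj : Function.Injective f := by
    intro i i' h
    by_contra hne
    simp only [hf] at h
    by_cases h1 : v i (σ i) - p (σ i) ≥ v i (τ i) - q (τ i) <;>
      by_cases h2 : v i' (σ i') - p (σ i') ≥ v i' (τ i') - q (τ i') <;>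
      simp only [h1, h2, if_true, if_false, if_pos, if_neg, not_false_iff] at h
    · exact hne (σ.injective h)
    · -- h : σ i = τ i'
      have hpq : p (σ i) ≤ q (σ i) := by
        have := hτ i (σ i); linarith
      have hqp : q (τ i') < p (τ i') := by
        have := hσ i' (τ i'); have := lt_of_not_ge h2; linarith
      rw [h] at hpq; linarith
    · -- h : τ i = σ i'
      have hpq : p (σ i') ≤ q (σ i') := by
        have := hτ i' (σ i'); linarith
      have hqp : q (τ i) < p (τ i) := by
        have := hσ i (τ i); have := lt_of_not_ge h1; linarith
      rw [← h] at hpq; linarith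
    · exact hne (τ.injective h)
  refine ⟨Equiv.ofBijective f (Finite.injective_iff_bijective.mp hinj), ?_⟩
  intro i k
  simp only [Equiv.ofBijective_apply, hf]
  by_cases h1 : v i (σ i) - p (σ i) ≥ v i (τ i) - q (τ i)
  · rw [if_pos h1]
    rcases le_total (p k) (q k) with h | h
    · rw [min_eq_left h]
      have := hσ i k
      have := min_le_left (p (σ i)) (q (σ i))
      linarith
    · rw [min_eq_right h]
      have := hτ i k
      have := min_le_left (p (σ i)) (q (σ i))
      linarith
  · rw [if_neg h1]
    have h1' := le_of_not_ge h1
    rcases le_total (p k) (q k) with h | h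
    · rw [min_eq_left h]
      have := hσ i k
      have := min_le_right (p (τ i)) (q (τ i))
      linarith
    · rw [min_eq_right h]
      have := hτ i k
      have := min_le_right (p (τ i)) (q (τ i))
      linarith
end

section
/- (Cyclic exchange inequality / no negative cycle) Let n be a natural number and v : Fin n → Fin n → ℝ a valuation matrix such that the identity permutation is a maximum matching, i.e., ∑ i, v i i ≥ ∑ i, v i (τ i) for every permutation τ : Fin n ≃ Fin n. Then for every m ≥ 1 and every injective function j : Fin m → Fin n, the cyclic exchange inequality holds: ∑ k, v (j k) (j k) ≥ ∑ k, v (j (k + 1)) (j k), where the index k + 1 is taken modulo m. -/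
/-- Cyclic exchange inequality: if the identity permutation is a maximum
matching, then for every cycle of `m + 1 ≥ 1` distinct products, the diagonal
valuations dominate the cyclically shifted ones (indices taken mod `m + 1`). -/
theorem stmt_13 (n : ℕ) (v : Fin n → Fin n → ℝ)
    (hid : ∀ τ : Equiv.Perm (Fin n), ∑ i, v i i ≥ ∑ i, v i (τ i)) :
    ∀ (m : ℕ) (j : Fin (m + 1) → Fin n), Function.Injective j →
      ∑ k, v (j k) (j k) ≥ ∑ k, v (j (k + 1)) (j k) := by
  intro m j hj
  set f : Fin (m + 1) ↪ Fin n := ⟨j, hj⟩ with hf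
  set σ : Equiv.Perm (Fin (m + 1)) := Equiv.subRight 1 with hσ
  set τ : Equiv.Perm (Fin n) := σ.viaFintypeEmbedding f with hτdef
  have hτ : ∀ k, τ (j k) = j (k - 1) := fun k =>
    Equiv.Perm.viaFintypeEmbedding_apply_image σ f k
  have hτ' : ∀ i : Fin n, i ∉ Set.range j → τ i = i := fun i hi =>
    Equiv.Perm.viaFintypeEmbedding_apply_notMem_range σ f hi
  have key := hid τ
  -- rewrite RHS sum by reindexing k ↦ k + 1
  have hre : ∑ k, v (j (k + 1)) (j k) = ∑ k, v (j k) (j (k - 1)) := by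
    refine Fintype.sum_equiv (Equiv.addRight 1) _ _ fun k => ?_
    simp
  rw [hre]
  have h1 : ∑ i, (v i (τ i) - v i i)
      = ∑ i ∈ Finset.univ.image j, (v i (τ i) - v i i) := by
    symm
    apply Finset.sum_subset (Finset.subset_univ _)
    intro i _ hi
    have hnr : i ∉ Set.range j := by
      rintro ⟨k, hk⟩
      exact hi (Finset.mem_image.mpr ⟨k, Finset.mem_univ k, hk⟩)
    rw [hτ' i hnr]; ring
  have h2 : ∑ i ∈ Finset.univ.image j, (v i (τ i) - v i i)
      = ∑ k, (v (j k) (j (k - 1)) - v (j k) (j k)) := by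
    rw [Finset.sum_image (fun a _ b _ h => hj h)]
    exact Finset.sum_congr rfl fun k _ => by rw [hτ k]
  have h3 : ∑ k, (v (j k) (j (k - 1)) - v (j k) (j k)) ≤ 0 := by
    rw [← h2, ← h1, Finset.sum_sub_distrib]
    linarith
  rw [Finset.sum_sub_distrib] at h3
  linarith
end

section
/- Let n be a natural number and v : Fin n → Fin n → ℝ a valuation matrix. If the identity permutation is a maximum matching (∑ i, v i i ≥ ∑ i, v i (τ i) for every permutation τ), then there exists a price vector p : Fin n → ℝ satisfying the difference constraints v i i - p i ≥ v i j - p j for all i, j; in particular, the identity permutation is induced by p and p is market-clearing. -/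
open Equiv

variable {α : Type*}

def pathCost (c : α → α → ℝ) : List α → ℝ
  | [] => 0
  | [_] => 0
  | a :: b :: l => c a b + pathCost c (b :: l)

/-- Every simple cycle has nonnegative cost; the cycle `a :: l` is closed by the edge from its last
vertex back to `a`. -/
def IsConservative (c : α → α → ℝ) : Prop :=
  ∀ a l, (a :: l).Nodup → 0 ≤ pathCost c (a :: l) + c ((a :: l).getLast (List.cons_ne_nil a l)) a

noncomputable def minPathCostFrom (c : α → α → ℝ) (i : α) : ℝ :=
  ⨅ l : {l : List α // (i :: l).Nodup}, pathCost c (i :: l)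

section

variable (c : α → α → ℝ)

@[simp]
lemma pathCost_singleton (a : α) : pathCost c [a] = 0 := rfl

@[simp]
lemma pathCost_cons_cons (a b : α) (l : List α) :
    pathCost c (a :: b :: l) = c a b + pathCost c (b :: l) := rfl

lemma pathCost_append_cons (l : List α) (x : α) (m : List α) :
    pathCost c (l ++ x :: m) = pathCost c (l ++ [x]) + pathCost c (x :: m) := by
  induction l with
  | nil => simp
  | cons a l ih =>
    cases l with
    | nil => simp
    | cons b l =>
      simp only [List.cons_append, pathCost_cons_cons] at ih ⊢
      rw [ih]
      ring

end

section

variable (c : α → α → ℝ) [Finite α]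

instance (i : α) : Finite {l : List α // (i :: l).Nodup} :=
  have := Fintype.ofFinite α
  Finite.of_injective (fun l => (⟨i :: l.1, l.2⟩ : {l : List α // l.Nodup}))
    fun _ _ h => Subtype.ext (List.cons_injective (congrArg Subtype.val h))

lemma minPathCostFrom_le_pathCost {i : α} {l : List α} (hl : (i :: l).Nodup) :
    minPathCostFrom c i ≤ pathCost c (i :: l) :=
  ciInf_le (Set.finite_range _).bddBelow (⟨l, hl⟩ : {l : List α // (i :: l).Nodup})

lemma exists_pathCost_eq_minPathCostFrom (i : α) :
    ∃ l, (i :: l).Nodup ∧ pathCost c (i :: l) = minPathCostFrom c i :=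
  have : Nonempty {l : List α // (i :: l).Nodup} := ⟨⟨[], List.nodup_singleton i⟩⟩
  let ⟨l, hl⟩ := exists_eq_ciInf_of_finite (f := fun l : {l : List α // (i :: l).Nodup} =>
    pathCost c (i :: l))
  ⟨l.1, l.2, hl⟩

theorem minPathCostFrom_le_add (hcons : IsConservative c) (i j : α) :
    minPathCostFrom c i ≤ c i j + minPathCostFrom c j := by
  obtain ⟨l, hl, hmin⟩ := exists_pathCost_eq_minPathCostFrom c j
  rw [← hmin]
  by_cases hi : i ∈ j :: l
  · rcases List.mem_cons.1 hi with rfl | hil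
    · have hloop : 0 ≤ c i i := by simpa using hcons i [] (List.nodup_singleton i)
      linarith [minPathCostFrom_le_pathCost c hl]
    -- The optimal path from `j` runs through `i`: its part up to `i`, closed by the edge `i → j`,
    -- is a cycle, and its part after `i` is a path from `i`.
    obtain ⟨A, B, rfl⟩ := List.append_of_mem hil
    have hcycle := hcons j (A ++ [i]) (hl.sublist (by simp))
    have hB := minPathCostFrom_le_pathCost c (hl.sublist (by simp) : (i :: B).Nodup)
    have hsplit := pathCost_append_cons c (j :: A) i B
    have hlast : (j :: (A ++ [i])).getLast (List.cons_ne_nil _ _) = i := by simp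
    rw [hlast] at hcycle
    simp only [List.cons_append] at hsplit
    linarith
  · exact minPathCostFrom_le_pathCost c (List.nodup_cons.2 ⟨hi, hl⟩)

theorem exists_potential_of_isConservative (hcons : IsConservative c) :
    ∃ p : α → ℝ, ∀ i j, p i ≤ c i j + p j :=
  ⟨minPathCostFrom c, minPathCostFrom_le_add c hcons⟩

end

section

variable (c : α → α → ℝ) [Fintype α] [DecidableEq α]

lemma sum_swap_mul_apply (hc : ∀ x, c x x = 0) {σ : Perm α} {a b z : α}
    (ha : σ a = a) (hz : σ z = b) (hab : a ≠ b) :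
    ∑ x, c x ((swap a b * σ) x) = ∑ x, c x (σ x) + c a b + c z a - c z b := by
  have hza : a ≠ z := fun h => hab (by rw [← ha, h, hz])
  have hrest : ∀ x, x ≠ a ∧ x ≠ z → c x ((swap a b * σ) x) - c x (σ x) = 0 := by
    rintro x ⟨hxa, hxz⟩
    have hσa : σ x ≠ a := fun h => hxa (σ.injective (h.trans ha.symm))
    have hσb : σ x ≠ b := fun h => hxz (σ.injective (h.trans hz.symm))
    rw [Perm.mul_apply, swap_apply_of_ne_of_ne hσa hσb, sub_self]
  have hdiff := Fintype.sum_eq_add a z hza hrest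
  simp only [Finset.sum_sub_distrib, Perm.mul_apply, ha, hz, swap_apply_left, swap_apply_right,
    hc] at hdiff ⊢
  linarith

lemma sum_apply_formPerm_cons (hc : ∀ x, c x x = 0) (a : α) (l : List α) (hl : (a :: l).Nodup) :
    ∑ x, c x ((a :: l).formPerm x) =
      pathCost c (a :: l) + c ((a :: l).getLast (List.cons_ne_nil a l)) a := by
  induction l generalizing a with
  | nil => simp [hc]
  | cons b l ih =>
    have hab : a ≠ b := fun h => hl.notMem (h ▸ List.mem_cons_self)
    rw [List.formPerm_cons_cons,
      sum_swap_mul_apply c hc (List.formPerm_apply_of_notMem hl.notMem)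
        (List.formPerm_apply_getLast b l) hab,
      ih b hl.of_cons, List.getLast_cons (List.cons_ne_nil b l), pathCost_cons_cons]
    ring

lemma isConservative_of_forall_perm (hc : ∀ x, c x x = 0)
    (hperm : ∀ σ : Perm α, 0 ≤ ∑ x, c x (σ x)) : IsConservative c := fun a l hl =>
  sum_apply_formPerm_cons c hc a l hl ▸ hperm _

end

/-- If the identity permutation is a maximum matching, then the system of
difference constraints is solvable; in particular, the resulting prices
induce the identity and are market-clearing. -/
theorem stmt_14 (n : ℕ) (v : Fin n → Fin n → ℝ)
    (hid : ∀ τ : Equiv.Perm (Fin n), ∑ i, v i i ≥ ∑ i, v i (τ i)) :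
    ∃ p : Fin n → ℝ, (∀ i j, v i i - p i ≥ v i j - p j) ∧
      Induced n v p (Equiv.refl (Fin n)) ∧ MarketClearing n v p := by
  have hcons : IsConservative fun i j => v i i - v i j :=
    isConservative_of_forall_perm _ (fun i => sub_self _) fun σ => by
      simpa [Finset.sum_sub_distrib] using hid σ
  obtain ⟨p, hp⟩ := exists_potential_of_isConservative _ hcons
  have hpref : ∀ i j, v i i - p i ≥ v i j - p j := fun i j => by linarith [hp i j]
  exact ⟨p, hpref, hpref, Equiv.refl _, hpref⟩
end

section
/- Let n be a natural number and v : Fin n → Fin n → ℝ a valuation matrix. For every maximum matching σ (a permutation with ∑ i, v i (σ i) ≥ ∑ i, v i (τ i) for all permutations τ), there exists a market-clearing price vector p : Fin n → ℝ such that σ is induced by p. -/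
/-!
Let `w j k` (`switchGain v σ j k`) be what the buyer who gets product `j` under `σ` gains
by switching to `k`. Maximality of `σ` says that every permutation, in particular every cyclic reassignment
along a simple cycle, has nonpositive total `w`-weight. With no positive cycles, the
largest weight `L x` of a simple path starting at `x` satisfies `w x y + L y ≤ L x`, and the
prices `p = -L` make every buyer content with the product assigned by `σ`.
-/

open Finset

section PathWeight

variable {α : Type*} (w : α → α → ℝ)

def pathWeight (l : List α) : ℝ := (List.zipWith w l l.tail).sum

@[simp] lemma pathWeight_singleton (a : α) : pathWeight w [a] = 0 := rfl

@[simp] lemma pathWeight_cons_cons (a b : α) (l : List α) :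
    pathWeight w (a :: b :: l) = w a b + pathWeight w (b :: l) := by
  simp [pathWeight]

lemma pathWeight_append_cons (l₁ : List α) (a : α) (l₂ : List α) :
    pathWeight w (l₁ ++ a :: l₂) = pathWeight w (l₁ ++ [a]) + pathWeight w (a :: l₂) := by
  induction l₁ with
  | nil => simp
  | cons b l₁ ih =>
    cases l₁ with
    | nil => simp
    | cons c l₁ => simp only [List.cons_append, pathWeight_cons_cons] at ih ⊢; rw [ih]; ring

lemma pathWeight_cycle_eq_sum_formPerm [DecidableEq α] {a : α} {l : List α}
    (h : (a :: l).Nodup) :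
    pathWeight w (a :: l ++ [a]) = ∑ x ∈ (a :: l).toFinset, w x ((a :: l).formPerm x) := by
  rw [List.sum_toFinset _ h, pathWeight]
  congr 1
  have hrot : (a :: l ++ [a]).tail = (a :: l).rotate 1 := by simp
  refine List.ext_getElem (by simp) fun i h₁ h₂ => ?_
  simp only [hrot, List.getElem_zipWith, List.getElem_map, List.getElem_rotate,
    List.formPerm_apply_getElem _ h]
  rw [List.getElem_append_left]

lemma pathWeight_cycle_nonpos [Fintype α] [DecidableEq α] (hdiag : ∀ x, w x x = 0)
    (hperm : ∀ π : Equiv.Perm α, ∑ x, w x (π x) ≤ 0) {a : α} {l : List α}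
    (h : (a :: l).Nodup) : pathWeight w (a :: l ++ [a]) ≤ 0 := by
  rw [pathWeight_cycle_eq_sum_formPerm w h]
  convert hperm (a :: l).formPerm using 1
  refine sum_subset (subset_univ _) fun x _ hx => ?_
  rw [List.formPerm_apply_of_notMem (by simpa using hx), hdiag]

variable [Fintype α] [DecidableEq α]

def longestPathWeight (x : α) : ℝ :=
  ((univ : Finset {l : List α // l.Nodup}).filter (·.1.head? = some x)).sup'
    ⟨⟨[x], List.nodup_singleton x⟩, by simp⟩ (pathWeight w ·.1)

lemma pathWeight_le_longestPathWeight {x : α} {l : List α} (h : (x :: l).Nodup) :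
    pathWeight w (x :: l) ≤ longestPathWeight w x :=
  le_sup' (fun l : {l : List α // l.Nodup} => pathWeight w l.1)
    (b := ⟨x :: l, h⟩) (by simp)

lemma exists_pathWeight_eq_longestPathWeight (x : α) :
    ∃ l : List α, (x :: l).Nodup ∧ pathWeight w (x :: l) = longestPathWeight w x := by
  unfold longestPathWeight
  generalize_proofs hne
  obtain ⟨⟨_ | ⟨y, l⟩, hl⟩, hmem, heq⟩ := exists_mem_eq_sup' hne (pathWeight w ·.1)
  · simp at hmem
  · obtain rfl : y = x := by simpa using hmem
    exact ⟨l, hl, heq.symm⟩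

lemma add_longestPathWeight_le
    (hcycle : ∀ a l, (a :: l).Nodup → pathWeight w (a :: l ++ [a]) ≤ 0) (x y : α) :
    w x y + longestPathWeight w y ≤ longestPathWeight w x := by
  obtain ⟨t, ht, hmax⟩ := exists_pathWeight_eq_longestPathWeight w y
  by_cases hx : x ∈ y :: t
  · rcases List.mem_cons.mp hx with rfl | hxt
    · have hloop : w x x ≤ 0 := by simpa using hcycle x [] (List.nodup_singleton x)
      linarith
    · -- the optimal path `y :: m ++ x :: l₂` splits at `x`, and `x :: y :: m` closes a cycle
      obtain ⟨m, l₂, rfl⟩ := List.append_of_mem hxt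
      have hsplit := pathWeight_append_cons w (y :: m) x l₂
      have hcyc := hcycle x (y :: m) (by simp only [List.nodup_cons,
        List.nodup_append, List.mem_append, List.mem_cons] at ht ⊢; grind)
      have htail := pathWeight_le_longestPathWeight w
        (ht.sublist ((List.sublist_append_right _ _).cons _))
      simp only [List.cons_append, pathWeight_cons_cons] at hsplit hcyc
      linarith
  · have hext := pathWeight_le_longestPathWeight w (List.nodup_cons.mpr ⟨hx, ht⟩)
    rw [pathWeight_cons_cons] at hext
    linarith

end PathWeight

section SwitchGain

variable {ι : Type*} (v : ι → ι → ℝ) (σ : Equiv.Perm ι)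

def switchGain (j k : ι) : ℝ := v (σ.symm j) k - v (σ.symm j) j

lemma switchGain_self (j : ι) : switchGain v σ j j = 0 := sub_self _

lemma sum_switchGain_nonpos [Fintype ι] (hσ : ∀ τ : Equiv.Perm ι, ∑ i, v i (σ i) ≥ ∑ i, v i (τ i))
    (π : Equiv.Perm ι) : ∑ j, switchGain v σ j (π j) ≤ 0 := by
  rw [← Equiv.sum_comp σ]
  simp only [switchGain, Equiv.symm_apply_apply, sum_sub_distrib]
  have hπσ := hσ (π * σ)
  simp only [Equiv.Perm.mul_apply] at hπσ
  linarith

end SwitchGain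

/-- Every maximum matching is induced by some market-clearing price vector. -/
theorem stmt_15 (n : ℕ) (v : Fin n → Fin n → ℝ) (σ : Equiv.Perm (Fin n))
    (hσ : ∀ τ : Equiv.Perm (Fin n), ∑ i, v i (σ i) ≥ ∑ i, v i (τ i)) :
    ∃ p : Fin n → ℝ, MarketClearing n v p ∧ Induced n v p σ := by
  have hcycle (a : Fin n) (l : List (Fin n)) (h : (a :: l).Nodup) :
      pathWeight (switchGain v σ) (a :: l ++ [a]) ≤ 0 :=
    pathWeight_cycle_nonpos _ (switchGain_self v σ) (sum_switchGain_nonpos v σ hσ) h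
  have hind : Induced n v (fun k => -longestPathWeight (switchGain v σ) k) σ := fun i k => by
    have hpot := add_longestPathWeight_le _ hcycle (σ i) k
    simp only [switchGain, Equiv.symm_apply_apply] at hpot
    linarith
  exact ⟨_, ⟨σ, hind⟩, hind⟩
end

section
/- Let n be a natural number and v : Fin n → Fin n → ℝ a valuation matrix. Then there exists a market-clearing price vector p : Fin n → ℝ, i.e., some p together with a permutation σ such that v i (σ i) - p (σ i) ≥ v i k - p k for all i and k. -/
/-!
Take an assignment `σ` of maximal total value. Moving the buyer of product `j` to product `k`
changes the welfare by `w j k = v (σ⁻¹ j) k - v (σ⁻¹ j) j`, and rotating the buyers along a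
cycle of products changes it by the total weight of the cycle, so by maximality no cycle of
the complete digraph weighted by `w` is positive. Then the prices `p k` = maximal weight of a
simple path ending at `k` satisfy `p j + w j k ≤ p k`: extend the best path to `j` by the edge
`j → k`, and if that closes a cycle, cut the cycle off. Unfolding `w`, this inequality says that
`σ i` is a preferred product of buyer `i` at prices `p`.
-/

open List

section Walks

variable {α : Type*} (w : α → α → ℝ)

def walkWeight : List α → ℝ
  | a :: b :: l => w a b + walkWeight (b :: l)
  | _ => 0

theorem walkWeight_append_cons (l₁ l₂ : List α) (b : α) :
    walkWeight w (l₁ ++ b :: l₂) = walkWeight w (l₁ ++ [b]) + walkWeight w (b :: l₂) := by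
  induction l₁ with
  | nil => simp [walkWeight]
  | cons a l ih => rcases l with _ | ⟨c, l⟩ <;> simp_all [walkWeight, add_assoc]

theorem walkWeight_append_singleton {l : List α} (hl : l ≠ []) (b : α) :
    walkWeight w (l ++ [b]) = walkWeight w l + w (l.getLast hl) b := by
  conv_lhs => rw [← dropLast_append_getLast hl, append_assoc, singleton_append,
    walkWeight_append_cons, dropLast_append_getLast hl]
  simp [walkWeight]

theorem sum_map_eq_walkWeight_add {f : α → α} :
    ∀ {l : List α}, l.IsChain (fun x y => f x = y) → (hl : l ≠ []) →
      (l.map fun x => w x (f x)).sum = walkWeight w l + w (l.getLast hl) (f (l.getLast hl))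
  | [a], _, _ => by simp [walkWeight]
  | a :: b :: l, hchain, _ => by
    obtain ⟨rfl, hchain⟩ := isChain_cons_cons.1 hchain
    rw [map_cons, sum_cons, sum_map_eq_walkWeight_add hchain (cons_ne_nil _ l)]
    simp only [walkWeight, getLast_cons_cons]
    ring

theorem walkWeight_cycle_eq_sum_formPerm [Fintype α] [DecidableEq α] (hdiag : ∀ x, w x x = 0)
    {x : α} {l : List α} (hl : (x :: l).Nodup) :
    walkWeight w (x :: l ++ [x]) = ∑ y, w y ((x :: l).formPerm y) := by
  have hchain : (x :: l).IsChain (fun a b => (x :: l).formPerm a = b) :=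
    isChain_iff_getElem.2 fun i hi => formPerm_apply_lt_getElem _ hl i hi
  rw [← Finset.sum_subset (Finset.subset_univ (x :: l).toFinset), sum_toFinset _ hl,
    sum_map_eq_walkWeight_add w hchain (cons_ne_nil x l), formPerm_apply_getLast,
    walkWeight_append_singleton w (cons_ne_nil x l)]
  intro y _ hy
  rw [formPerm_apply_of_notMem (by simpa using hy), hdiag]

theorem exists_max_walkWeight_simplePath [Finite α] (k : α) :
    ∃ l, (l ++ [k]).Nodup ∧
      ∀ l', (l' ++ [k]).Nodup → walkWeight w (l' ++ [k]) ≤ walkWeight w (l ++ [k]) := by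
  have : Fintype α := Fintype.ofFinite α
  refine Set.exists_max_image {l | (l ++ [k]).Nodup} (fun l => walkWeight w (l ++ [k])) ?_
    ⟨[], by simp⟩
  exact (Set.finite_range (Subtype.val : {l : List α // l.Nodup} → List α)).subset
    fun l hl => ⟨⟨l, hl.sublist (sublist_append_left l [k])⟩, rfl⟩

theorem exists_potential_of_cycle_nonpos [Finite α]
    (hcycle : ∀ x l, (x :: l).Nodup → walkWeight w (x :: l ++ [x]) ≤ 0) :
    ∃ p : α → ℝ, ∀ j k, p j + w j k ≤ p k := by
  choose path hpath hmax using exists_max_walkWeight_simplePath w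
  refine ⟨fun k => walkWeight w (path k ++ [k]), fun j k => ?_⟩
  have hjk : walkWeight w (path j ++ [j] ++ [k]) = walkWeight w (path j ++ [j]) + w j k := by
    rw [walkWeight_append_singleton w (l := path j ++ [j]) (by simp), getLast_append_singleton]
  rw [← hjk]
  by_cases hk : k ∈ path j ++ [j]
  · obtain ⟨s, t, hst⟩ := append_of_mem hk
    have hnodup := hpath j
    rw [hst] at hnodup ⊢
    -- the walk splits into the simple path `s ++ [k]` and the simple cycle `k :: t ++ [k]`
    rw [append_assoc, cons_append, walkWeight_append_cons, ← cons_append]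
    have hs : (s ++ [k]).Nodup := hnodup.sublist (by simp)
    have ht : (k :: t).Nodup := hnodup.sublist (sublist_append_right s _)
    linarith [hmax k s hs, hcycle k t ht]
  · refine hmax k _ (nodup_append.2 ⟨hpath j, nodup_singleton k, fun a ha b hb hab => ?_⟩)
    rw [mem_singleton.1 hb] at hab
    exact hk (hab ▸ ha)

end Walks

section Assignment

variable {ι α : Type*} [Fintype ι] [Fintype α] (v : ι → α → ℝ)

theorem exists_supporting_prices_of_welfare_max (σ : ι ≃ α)
    (hσ : ∀ τ : ι ≃ α, ∑ i, v i (τ i) ≤ ∑ i, v i (σ i)) :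
    ∃ p : α → ℝ, ∀ i k, v i k - p k ≤ v i (σ i) - p (σ i) := by
  classical
  set w : α → α → ℝ := fun j k => v (σ.symm j) k - v (σ.symm j) j
  have hcycle : ∀ x l, (x :: l).Nodup → walkWeight w (x :: l ++ [x]) ≤ 0 := by
    intro x l hl
    set τ := (x :: l).formPerm
    calc walkWeight w (x :: l ++ [x]) = ∑ j, w j (τ j) :=
          walkWeight_cycle_eq_sum_formPerm w (fun j => sub_self _) hl
      _ = ∑ i, w (σ i) (τ (σ i)) := (Equiv.sum_comp σ _).symm
      _ = ∑ i, v i ((σ.trans τ) i) - ∑ i, v i (σ i) := by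
          simp [w, Finset.sum_sub_distrib]
      _ ≤ 0 := sub_nonpos.2 (hσ _)
  obtain ⟨p, hp⟩ := exists_potential_of_cycle_nonpos w hcycle
  refine ⟨p, fun i k => ?_⟩
  have := hp (σ i) k
  simp only [w, Equiv.symm_apply_apply] at this
  linarith

end Assignment

/-- For every valuation matrix there exists a market-clearing price vector. -/
theorem stmt_16 (n : ℕ) (v : Fin n → Fin n → ℝ) :
    ∃ (p : Fin n → ℝ) (σ : Equiv.Perm (Fin n)),
      ∀ i k, v i (σ i) - p (σ i) ≥ v i k - p k := by
  obtain ⟨σ, hσ⟩ := Finite.exists_max fun σ : Equiv.Perm (Fin n) => ∑ i, v i (σ i)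
  obtain ⟨p, hp⟩ := exists_supporting_prices_of_welfare_max v σ hσ
  exact ⟨p, σ, hp⟩
end

section
/- (One versus all) Let n be a natural number and v : Fin n → Fin n → ℝ a valuation matrix. For any market-clearing price vector p : Fin n → ℝ, the set PM(p) of permutations induced by p is nonempty and equals the set of all maximum matchings: σ ∈ PM(p) if and only if ∑ i, v i (σ i) ≥ ∑ i, v i (τ i) for every permutation τ. -/
lemma welfare_eq (n : ℕ) (v : Fin n → Fin n → ℝ) (p : Fin n → ℝ)
    (σ : Equiv.Perm (Fin n)) :
    ∑ i, v i (σ i) = (∑ i, (v i (σ i) - p (σ i))) + ∑ j, p j := by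
  have : ∑ i, p (σ i) = ∑ j, p j := Equiv.sum_comp σ p
  rw [Finset.sum_sub_distrib, this]
  ring

/-- One versus all: any market-clearing price vector induces a nonempty set of
matchings that is exactly the set of all maximum matchings. -/
theorem stmt_17 (n : ℕ) (v : Fin n → Fin n → ℝ) (p : Fin n → ℝ)
    (hp : MarketClearing n v p) :
    (PM n v p).Nonempty ∧
      ∀ σ : Equiv.Perm (Fin n), σ ∈ PM n v p ↔
        ∀ τ : Equiv.Perm (Fin n), ∑ i, v i (σ i) ≥ ∑ i, v i (τ i) := by
  obtain ⟨σ₀, hσ₀⟩ := hp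
  refine ⟨⟨σ₀, hσ₀⟩, fun σ => ⟨fun hσ τ => ?_, fun hmax => ?_⟩⟩
  · rw [welfare_eq n v p σ, welfare_eq n v p τ]
    have : ∀ i, v i (τ i) - p (τ i) ≤ v i (σ i) - p (σ i) := fun i => hσ i (τ i)
    have h2 : ∑ i, (v i (τ i) - p (τ i)) ≤ ∑ i, (v i (σ i) - p (σ i)) :=
      Finset.sum_le_sum (fun i _ => this i)
    linarith
  · -- σ maximizes welfare; compare with σ₀
    have hterm : ∀ i, v i (σ i) - p (σ i) ≤ v i (σ₀ i) - p (σ₀ i) :=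
      fun i => hσ₀ i (σ i)
    have hsum : ∑ i, (v i (σ i) - p (σ i)) ≤ ∑ i, (v i (σ₀ i) - p (σ₀ i)) :=
      Finset.sum_le_sum (fun i _ => hterm i)
    have hw : ∑ i, v i (σ₀ i) ≤ ∑ i, v i (σ i) := hmax σ₀
    rw [welfare_eq n v p σ, welfare_eq n v p σ₀] at hw
    have hsum' : ∑ i, (v i (σ₀ i) - p (σ₀ i)) ≤ ∑ i, (v i (σ i) - p (σ i)) := by
      linarith
    have heq : ∀ i ∈ Finset.univ, v i (σ i) - p (σ i) = v i (σ₀ i) - p (σ₀ i) := by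
      intro i _
      exact le_antisymm (hterm i)
        (by
          by_contra h
          push_neg at h
          have := Finset.sum_lt_sum (fun j _ => hterm j) ⟨i, Finset.mem_univ i, h⟩
          linarith)
    intro i k
    calc v i (σ i) - p (σ i) = v i (σ₀ i) - p (σ₀ i) := heq i (Finset.mem_univ i)
      _ ≥ v i k - p k := hσ₀ i k
end

section
/- Let n be a natural number and v : Fin n → Fin n → ℝ a valuation matrix. If p : Fin n → ℝ is a market-clearing price vector, then every maximum matching is induced by p: for every permutation σ with ∑ i, v i (σ i) ≥ ∑ i, v i (τ i) for all permutations τ, we have v i (σ i) - p (σ i) ≥ v i k - p k for all i and k. -/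
/-- Every maximum matching is induced by any market-clearing price vector. -/
theorem stmt_18 (n : ℕ) (v : Fin n → Fin n → ℝ) (p : Fin n → ℝ)
    (hp : MarketClearing n v p) (σ : Equiv.Perm (Fin n))
    (hσ : ∀ τ : Equiv.Perm (Fin n), ∑ i, v i (σ i) ≥ ∑ i, v i (τ i)) :
    ∀ i k, v i (σ i) - p (σ i) ≥ v i k - p k := by
  obtain ⟨τ, hτ⟩ := hp
  -- pointwise: v i (σ i) - p (σ i) ≤ v i (τ i) - p (τ i)
  have hpt : ∀ i ∈ Finset.univ, v i (σ i) - p (σ i) ≤ v i (τ i) - p (τ i) :=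
    fun i _ => hτ i (σ i)
  have hps : ∑ i, p (σ i) = ∑ i, p (τ i) := by
    rw [Equiv.sum_comp σ p, Equiv.sum_comp τ p]
  have hsum : ∑ i, (v i (τ i) - p (τ i)) ≤ ∑ i, (v i (σ i) - p (σ i)) := by
    simp only [Finset.sum_sub_distrib]
    have := hσ τ
    linarith [hps]
  have hsum' : ∑ i, (v i (σ i) - p (σ i)) ≤ ∑ i, (v i (τ i) - p (τ i)) :=
    Finset.sum_le_sum hpt
  have heq : ∀ i ∈ Finset.univ, v i (σ i) - p (σ i) = v i (τ i) - p (τ i) :=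
    (Finset.sum_eq_sum_iff_of_le hpt).mp (le_antisymm hsum' hsum)
  intro i k
  have := heq i (Finset.mem_univ i)
  have := hτ i k
  linarith
end

section
/- (Remark to the same-set lemma) Let n be a natural number and v : Fin n → Fin n → ℝ a valuation matrix, and let p, q : Fin n → ℝ be price vectors whose preferred-product graphs each contain at least one perfect matching (i.e., each of p and q induces some permutation). Then the preferred-product graphs G(p) and G(q) contain exactly the same perfect matchings, even though G(p) and G(q) may differ as edge sets: for every permutation σ, (∀ i, (i, σ i) ∈ G(p)) ↔ (∀ i, (i, σ i) ∈ G(q)). -/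
/-- The preferred-product graph of `p`: edges `(i, j)` such that product `j`
maximizes buyer `i`'s payoff at prices `p`. -/
def PrefGraph (n : ℕ) (v : Fin n → Fin n → ℝ) (p : Fin n → ℝ) :
    Set (Fin n × Fin n) :=
  {e | ∀ k, v e.1 e.2 - p e.2 ≥ v e.1 k - p k}

private lemma perm_sum_comp {n : ℕ} (p : Fin n → ℝ) (σ : Equiv.Perm (Fin n)) :
    ∑ i, p (σ i) = ∑ i, p i :=
  Fintype.sum_equiv σ _ _ (fun _ => rfl)

private lemma key {n : ℕ} (v : Fin n → Fin n → ℝ) (p q : Fin n → ℝ)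
    (σ τ : Equiv.Perm (Fin n))
    (hσ : ∀ i, (i, σ i) ∈ PrefGraph n v p)
    (hτ : ∀ i, (i, τ i) ∈ PrefGraph n v q) :
    ∀ i, (i, σ i) ∈ PrefGraph n v q := by
  -- pointwise inequalities
  have h1 : ∀ i, v i (τ i) - p (τ i) ≤ v i (σ i) - p (σ i) := fun i => hσ i (τ i)
  have h2 : ∀ i, v i (σ i) - q (σ i) ≤ v i (τ i) - q (τ i) := fun i => hτ i (σ i)
  have s1 : ∑ i, v i (τ i) ≤ ∑ i, v i (σ i) := by
    have := Finset.sum_le_sum (s := Finset.univ) (fun i _ => h1 i)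
    simpa [Finset.sum_sub_distrib, perm_sum_comp p σ, perm_sum_comp p τ] using this
  have s2 : ∑ i, v i (σ i) ≤ ∑ i, v i (τ i) := by
    have := Finset.sum_le_sum (s := Finset.univ) (fun i _ => h2 i)
    simpa [Finset.sum_sub_distrib, perm_sum_comp q σ, perm_sum_comp q τ] using this
  have seq : ∑ i, (v i (σ i) - q (σ i)) = ∑ i, (v i (τ i) - q (τ i)) := by
    have : ∑ i, v i (σ i) = ∑ i, v i (τ i) := le_antisymm s2 s1
    simp [Finset.sum_sub_distrib, this, perm_sum_comp q σ, perm_sum_comp q τ]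
  have heq : ∀ i ∈ Finset.univ, v i (σ i) - q (σ i) = v i (τ i) - q (τ i) :=
    (Finset.sum_eq_sum_iff_of_le (fun i _ => h2 i)).mp seq
  intro i k
  have := hτ i k
  have h := heq i (Finset.mem_univ i)
  simp only [PrefGraph, Set.mem_setOf_eq] at *
  linarith [hτ i k]

/-- If the preferred-product graphs of `p` and `q` each contain a perfect
matching, then they contain exactly the same perfect matchings. -/
theorem stmt_19 (n : ℕ) (v : Fin n → Fin n → ℝ) (p q : Fin n → ℝ)
    (hp : ∃ σ : Equiv.Perm (Fin n), ∀ i, (i, σ i) ∈ PrefGraph n v p)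
    (hq : ∃ σ : Equiv.Perm (Fin n), ∀ i, (i, σ i) ∈ PrefGraph n v q) :
    ∀ σ : Equiv.Perm (Fin n),
      (∀ i, (i, σ i) ∈ PrefGraph n v p) ↔ (∀ i, (i, σ i) ∈ PrefGraph n v q) := by
  obtain ⟨σp, hσp⟩ := hp
  obtain ⟨σq, hσq⟩ := hq
  intro σ
  exact ⟨fun h => key v p q σ σq h hσq, fun h => key v q p σ σp h hσp⟩
end
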